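/- arXiv:math/9310228 — 2 statements merged into one kernel-verified Lean document; each statement's English description precedes it below -/
import Mathlib

section
/- (Helly's theorem) Let {U_α}_{α ∈ S} be a finite family of convex subsets of ℝⁿ with |S| ≥ n+1. If every subfamily with n+1 sets has nonempty intersection, then the whole family has nonempty intersection. -/
/-- **Helly's theorem**: a finite family of at least `n + 1` convex subsets of `ℝⁿ` such that
every subfamily of `n + 1` of them has nonempty intersection has nonempty intersection. -/
theorem helly {n : ℕ} {ι : Type*} [Fintype ι] (U : ι → Set (Fin n → ℝ))
    (hconv : ∀ i, Convex ℝ (U i)) (hcard : n + 1 ≤ Fintype.card ι)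
    (hint : ∀ θ : Finset ι, θ.card = n + 1 → (⋂ i ∈ θ, U i).Nonempty) :
    (⋂ i, U i).Nonempty := by
  have hrank : Module.finrank ℝ (Fin n → ℝ) = n := by simp
  have := Convex.helly_theorem (𝕜 := ℝ) (F := U) (s := Finset.univ)
    (by simpa [hrank] using hcard) (fun i _ ↦ hconv i)
    (fun I _ hI ↦ hint I (by rwa [hrank] at hI))
  simpa using this
end

section
/- Let U₁, U₂, U₃ be convex open subsets of ℝ² such that each pairwise intersection U_i ∩ U_j is nonempty and the union U₁ ∪ U₂ ∪ U₃ is simply connected. Then U₁ ∩ U₂ ∩ U₃ ≠ ∅. -/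
/-!
If `U 0 ∩ U 1 ∩ U 2 = ∅`, a partition of unity `ρ` subordinate to the cover realises the Čech
cocycle that is `1` on `U 2 ∩ U 0` and `0` on the other two overlaps: the local functions
`-ρ 2`, `0`, `ρ 0` on `U 0`, `U 1`, `U 2` agree modulo `1` on overlaps and glue to a map into
`ℝ/ℤ`. On a simply connected, locally path connected space this map lifts to `L : X → ℝ`, and on
each connected `U i` the difference between `L` and the local function is an integer constant
`c i`. Comparing at points of the three pairwise intersections gives `c 0 = c 1 = c 2` and
`c 0 - c 2 = 1`.
-/

open Set Topology

local notation "𝕋" => AddCircle (1 : ℝ)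

section

variable {X : Type*} [TopologicalSpace X]

theorem IsPreconnected.sub_eq_sub_of_coe_eq {U : Set X} (hU : IsPreconnected U) {f g : X → ℝ}
    (hf : ContinuousOn f U) (hg : ContinuousOn g U) (hfg : ∀ x ∈ U, (f x : 𝕋) = g x)
    {x y : X} (hx : x ∈ U) (hy : y ∈ U) : f x - g x = f y - g y :=
  hU.constant_of_mapsTo (T := AddSubgroup.zmultiples (1 : ℝ))
    (SetLike.isDiscrete_iff_discreteTopology.2 inferInstance) (hf.sub hg)
    (fun z hz => (QuotientAddGroup.eq_zero_iff _).1 (by simp [hfg z hz])) hx hy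

theorem exists_addCircle_eq_coe_of_open_cover {ι : Type*} {U : ι → Set X}
    (hU : ∀ i, IsOpen (U i)) (hcover : ∀ x, ∃ i, x ∈ U i) (g : ι → C(X, ℝ))
    (hg : ∀ i j, ∀ x ∈ U i ∩ U j, (g i x : 𝕋) = g j x) :
    ∃ h : C(X, 𝕋), ∀ i, ∀ x ∈ U i, h x = g i x :=
  ⟨.liftCover U (fun i => (⟨((↑) : ℝ → 𝕋), AddCircle.continuous_mk' 1⟩ : C(ℝ, 𝕋)).comp (g i)
      |>.restrict (U i)) (fun i j x hi hj => hg i j x ⟨hi, hj⟩)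
      (fun x => (hcover x).imp fun i hi => (hU i).mem_nhds hi),
    fun _ x hx => ContinuousMap.liftCover_coe ⟨x, hx⟩⟩

theorem exists_lift_sub_eq_sub_of_open_cover [SimplyConnectedSpace X]
    [LocallyPathConnectedSpace X] {ι : Type*} {U : ι → Set X} (hU : ∀ i, IsOpen (U i))
    (hconn : ∀ i, IsPreconnected (U i))
    (hcover : ∀ x, ∃ i, x ∈ U i) (g : ι → C(X, ℝ))
    (hg : ∀ i j, ∀ x ∈ U i ∩ U j, (g i x : 𝕋) = g j x) :
    ∃ L : C(X, ℝ), ∀ i, ∀ x ∈ U i, ∀ y ∈ U i, L x - g i x = L y - g i y := by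
  obtain ⟨h, hh⟩ := exists_addCircle_eq_coe_of_open_cover hU hcover g hg
  obtain ⟨x₀⟩ := (inferInstance : Nonempty X)
  obtain ⟨e₀, he₀⟩ := QuotientAddGroup.mk_surjective (h x₀)
  obtain ⟨L, -, hL⟩ :=
    ((AddCircle.isCoveringMap_coe 1).existsUnique_continuousMap_lifts h x₀ e₀ he₀).exists
  exact ⟨L, fun i x hx y hy => (hconn i).sub_eq_sub_of_coe_eq L.continuous.continuousOn
    (g i).continuous.continuousOn (fun z hz => (congrFun hL z).trans (hh i z hz)) hx hy⟩

theorem exists_continuousMap_add_eq_one_of_inter_three_eq_empty [NormalSpace X]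
    {U : Fin 3 → Set X} (hU : ∀ i, IsOpen (U i)) (hcover : ∀ x, ∃ i, x ∈ U i)
    (hempty : U 0 ∩ U 1 ∩ U 2 = ∅) :
    ∃ φ ψ : C(X, ℝ), (∀ x ∈ U 0 ∩ U 1, ψ x = 0) ∧ (∀ x ∈ U 1 ∩ U 2, φ x = 0) ∧
      ∀ x ∈ U 2 ∩ U 0, φ x + ψ x = 1 := by
  obtain ⟨ρ, hρ⟩ := PartitionOfUnity.exists_isSubordinate_of_locallyFinite isClosed_univ U hU
    (locallyFinite_of_finite U) fun x _ => mem_iUnion.2 (hcover x)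
  have hzero : ∀ i, ∀ x ∉ U i, ρ i x = 0 := fun i _ hx =>
    image_eq_zero_of_notMem_tsupport fun h => hx (hρ i h)
  have hnot : ∀ x, x ∈ U 0 → x ∈ U 1 → x ∉ U 2 := fun x h0 h1 h2 =>
    eq_empty_iff_forall_notMem.1 hempty x ⟨⟨h0, h1⟩, h2⟩
  refine ⟨ρ 0, ρ 2, fun x hx => hzero 2 x (hnot x hx.1 hx.2),
    fun x hx => hzero 0 x fun h0 => hnot x h0 hx.1 hx.2, fun x hx => ?_⟩
  have hsum := ρ.sum_eq_one (mem_univ x)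
  rw [finsum_eq_sum_of_fintype, Fin.sum_univ_three, hzero 1 x fun h1 => hnot x hx.2 h1 hx.1]
    at hsum
  linarith

theorem inter_three_nonempty_of_open_cover [NormalSpace X] [SimplyConnectedSpace X]
    [LocallyPathConnectedSpace X] (U : Fin 3 → Set X) (hopen : ∀ i, IsOpen (U i))
    (hconn : ∀ i, IsPreconnected (U i)) (hcover : ∀ x, ∃ i, x ∈ U i)
    (hpair : ∀ i j, i ≠ j → (U i ∩ U j).Nonempty) : (U 0 ∩ U 1 ∩ U 2).Nonempty := by
  by_contra hempty
  obtain ⟨φ, ψ, hψ, hφ, hφψ⟩ := exists_continuousMap_add_eq_one_of_inter_three_eq_empty hopen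
    hcover (not_nonempty_iff_eq_empty.1 hempty)
  let g : Fin 3 → C(X, ℝ) := ![-ψ, 0, φ]
  have hg : ∀ i j, ∀ x ∈ U i ∩ U j, (g i x : 𝕋) = g j x := by
    have c01 : ∀ x ∈ U 0 ∩ U 1, (g 0 x : 𝕋) = g 1 x := fun x hx => by simp [g, hψ x hx]
    have c12 : ∀ x ∈ U 1 ∩ U 2, (g 1 x : 𝕋) = g 2 x := fun x hx => by simp [g, hφ x hx]
    have c20 : ∀ x ∈ U 2 ∩ U 0, (g 2 x : 𝕋) = g 0 x := fun x hx => by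
      have hshift : g 2 x = g 0 x + 1 := by
        simp only [g, Matrix.cons_val, Matrix.cons_val_zero, ContinuousMap.neg_apply]
        linarith [hφψ x hx]
      rw [hshift, AddCircle.coe_add_period]
    rintro i j x ⟨hi, hj⟩
    fin_cases i <;> fin_cases j
    exacts [rfl, c01 x ⟨hi, hj⟩, (c20 x ⟨hj, hi⟩).symm, (c01 x ⟨hj, hi⟩).symm, rfl, c12 x ⟨hi, hj⟩,
      c20 x ⟨hi, hj⟩, (c12 x ⟨hj, hi⟩).symm, rfl]
  obtain ⟨L, hL⟩ := exists_lift_sub_eq_sub_of_open_cover hopen hconn hcover g hg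
  obtain ⟨p01, hp01⟩ := hpair 0 1 (by decide)
  obtain ⟨p12, hp12⟩ := hpair 1 2 (by decide)
  obtain ⟨p20, hp20⟩ := hpair 2 0 (by decide)
  have e0 := hL 0 p01 hp01.1 p20 hp20.2
  have e1 := hL 1 p01 hp01.2 p12 hp12.1
  have e2 := hL 2 p12 hp12.2 p20 hp20.1
  simp only [g, Matrix.cons_val, Matrix.cons_val_zero, Matrix.cons_val_one, ContinuousMap.neg_apply,
    ContinuousMap.zero_apply] at e0 e1 e2
  linarith [hψ p01 hp01, hφ p12 hp12, hφψ p20 hp20]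

end

theorem inter_three_nonempty_of_simplyConnectedSpace_union {Y : Type*} [TopologicalSpace Y]
    [CompletelyNormalSpace Y] [LocallyPathConnectedSpace Y] (U : Fin 3 → Set Y)
    (hopen : ∀ i, IsOpen (U i)) (hconn : ∀ i, IsPreconnected (U i))
    (hpair : ∀ i j, i ≠ j → (U i ∩ U j).Nonempty)
    [SimplyConnectedSpace ↥(U 0 ∪ U 1 ∪ U 2)] : (U 0 ∩ U 1 ∩ U 2).Nonempty := by
  set Ω := U 0 ∪ U 1 ∪ U 2
  have hsub : ∀ i, U i ⊆ Ω := by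
    intro i
    fin_cases i
    exacts [subset_union_left.trans subset_union_left, subset_union_right.trans subset_union_left,
      subset_union_right]
  have : LocallyPathConnectedSpace Ω :=
    (((hopen 0).union (hopen 1)).union (hopen 2)).locallyPathConnectedSpace
  obtain ⟨x, hx⟩ := inter_three_nonempty_of_open_cover (fun i => ((↑) : Ω → Y) ⁻¹' U i)
    (fun i => (hopen i).preimage continuous_subtype_val)
    (fun i => IsInducing.subtypeVal.isPreconnected_image.1 <| by
      rw [Subtype.image_preimage_coe, inter_eq_right.2 (hsub i)]; exact hconn i)
    (fun x => by rcases x.2 with (h | h) | h; exacts [⟨0, h⟩, ⟨1, h⟩, ⟨2, h⟩])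
    (fun i j hij => let ⟨y, hy⟩ := hpair i j hij; ⟨⟨y, hsub i hy.1⟩, hy⟩)
  exact ⟨x, hx⟩

/-- Three convex open subsets of the plane with nonempty pairwise intersections and simply
connected union have a common point. -/
theorem inter_three_nonempty_of_simplyConnected (U : Fin 3 → Set (Fin 2 → ℝ))
    (hconv : ∀ i, Convex ℝ (U i)) (hopen : ∀ i, IsOpen (U i))
    (hpair : ∀ i j, i ≠ j → (U i ∩ U j).Nonempty)
    (hsc : SimplyConnectedSpace ↥(U 0 ∪ U 1 ∪ U 2)) :
    (U 0 ∩ U 1 ∩ U 2).Nonempty :=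
  inter_three_nonempty_of_simplyConnectedSpace_union U hopen (fun i => (hconv i).isPreconnected)
    hpair
end
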